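/- For n = 751530 = 2 · 3 · 5 · 13 · 41 · 47, the sum of divisors σ(n³) is a perfect square. -/

import Mathlib

/-!
Since `σ` is multiplicative and `σ(p³) = (1 + p)(1 + p²)`, the value `σ(751530³)` is the product
of `(1 + p)(1 + p²)` over `p ∈ {2, 3, 5, 13, 41, 47}`, namely
`15 · 40 · 156 · 2380 · 70644 · 106080 = (2⁷ · 3² · 5² · 7 · 13 · 17 · 29)²`.
-/

open ArithmeticFunction
open scoped ArithmeticFunction.sigma Function

theorem ArithmeticFunction.sigma_one_apply_prime_pow_three {p : ℕ} (hp : p.Prime) :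
    σ 1 (p ^ 3) = (1 + p) * (1 + p ^ 2) := by
  rw [sigma_one_apply_prime_pow hp]
  simp only [Finset.sum_range_succ, Finset.sum_range_zero]
  ring

theorem ArithmeticFunction.sigma_one_prod_primes_pow_three {s : Finset ℕ}
    (hs : ∀ p ∈ s, p.Prime) :
    σ 1 ((∏ p ∈ s, p) ^ 3) = ∏ p ∈ s, (1 + p) * (1 + p ^ 2) := by
  have hcoprime : (s : Set ℕ).Pairwise (Nat.Coprime on fun p => p ^ 3) :=
    fun p hp q hq hpq => ((Nat.coprime_primes (hs p hp) (hs q hq)).mpr hpq).pow 3 3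
  rw [← Finset.prod_pow, isMultiplicative_sigma.map_prod _ s hcoprime]
  exact Finset.prod_congr rfl fun p hp => sigma_one_apply_prime_pow_three (hs p hp)

theorem fermat_challenge_cube :
    (751530 : ℕ) = 2 * 3 * 5 * 13 * 41 * 47 ∧
    IsSquare (ArithmeticFunction.sigma 1 (751530 ^ 3)) := by
  have hfactor : (751530 : ℕ) = ∏ p ∈ {2, 3, 5, 13, 41, 47}, p := by decide
  have hprimes : ∀ p ∈ ({2, 3, 5, 13, 41, 47} : Finset ℕ), p.Prime := by decide
  refine ⟨by norm_num, 2 ^ 7 * 3 ^ 2 * 5 ^ 2 * 7 * 13 * 17 * 29, ?_⟩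
  rw [hfactor, sigma_one_prod_primes_pow_three hprimes]
  decide
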